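/- Let d ∈ ℕ with d ≥ 1, α ∈ (d/2, ∞), β ∈ ℝ and c ∈ (0,∞). Then sup_{v ∈ ℤ^d} [ (λ_v)^β · Σ_{k ∈ ℤ^d, ‖k‖ > c‖v‖} 1/(λ_k)^α ] < ∞ if and only if β ≤ α − d/2. -/

import Mathlib

/-!
Since `λ_k ≍ (1 + ‖k‖)²`, the tail `∑_{‖k‖ > r} λ_k^(-α)` is comparable to `(1 + r)^(d - 2α)`.
From above, split `ℤ^d` into the shells `max_i |k_i| = n`, which have `O(n^(d-1))` points, and
bound `∑_{n ≥ N} (n + 1)^(-(2α + 1 - d))` by the integral test. From below, the cube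
`[M, 2M)^d` with `M = ⌊r⌋ + 1` has `M^d` points, all outside the ball of radius `r` and with
`λ_k ≤ 5 d M²`. Hence `λ_v^β ∑_{‖k‖ > c‖v‖} λ_k^(-α) ≍ λ_v^(β + d/2 - α)`, and since `λ` is
unbounded on `ℤ^d` the supremum is finite exactly when `β + d/2 - α ≤ 0`.
-/

open scoped ENNReal

/-- `λ_x = 1 + x₁² + ⋯ + x_d²` for a lattice point `x ∈ ℤ^d`. -/
noncomputable def lam {d : ℕ} (x : Fin d → ℤ) : ℝ := 1 + ∑ i, ((x i : ℝ)) ^ 2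

/-- The Euclidean norm of a lattice point `x ∈ ℤ^d`. -/
noncomputable def znorm {d : ℕ} (x : Fin d → ℤ) : ℝ := Real.sqrt (∑ i, ((x i : ℝ)) ^ 2)

open Real Finset Filter

def maxAbs {d : ℕ} (k : Fin d → ℤ) : ℕ := univ.sup fun i => (k i).natAbs

noncomputable def latticeTail (d : ℕ) (α r : ℝ) : ℝ≥0∞ :=
  ∑' k : Fin d → ℤ, if r < znorm k then ENNReal.ofReal (1 / lam k ^ α) else 0

section GrowthRate

variable {d : ℕ} {α c : ℝ}

lemma sum_sq_nonneg (k : Fin d → ℤ) : 0 ≤ ∑ i, (k i : ℝ) ^ 2 :=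
  sum_nonneg fun _ _ => sq_nonneg _

lemma one_le_lam (k : Fin d → ℤ) : 1 ≤ lam k :=
  le_add_of_nonneg_right (sum_sq_nonneg k)

lemma lam_pos (k : Fin d → ℤ) : 0 < lam k :=
  one_pos.trans_le (one_le_lam k)

lemma znorm_nonneg (k : Fin d → ℤ) : 0 ≤ znorm k :=
  sqrt_nonneg _

lemma lam_eq_one_add_sq_znorm (k : Fin d → ℤ) : lam k = 1 + znorm k ^ 2 := by
  rw [lam, znorm, sq_sqrt (sum_sq_nonneg k)]

lemma znorm_le_sqrt_lam (k : Fin d → ℤ) : znorm k ≤ √(lam k) :=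
  sqrt_le_sqrt (by rw [lam]; linarith)

lemma one_le_sqrt_lam (k : Fin d → ℤ) : 1 ≤ √(lam k) :=
  one_le_sqrt.mpr (one_le_lam k)

lemma sqrt_lam_le_one_add_znorm (k : Fin d → ℤ) : √(lam k) ≤ 1 + znorm k := by
  rw [sqrt_le_left (by linarith [znorm_nonneg k]), lam_eq_one_add_sq_znorm]
  nlinarith [znorm_nonneg k]

lemma abs_le_znorm (k : Fin d → ℤ) (i : Fin d) : |(k i : ℝ)| ≤ znorm k := by
  rw [← sqrt_sq_eq_abs]
  exact sqrt_le_sqrt (single_le_sum (fun j _ => sq_nonneg (k j : ℝ)) (mem_univ i))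

lemma natAbs_le_maxAbs (k : Fin d → ℤ) (i : Fin d) : (k i).natAbs ≤ maxAbs k :=
  le_sup (f := fun i => (k i).natAbs) (mem_univ i)

lemma abs_le_maxAbs (k : Fin d → ℤ) (i : Fin d) : |(k i : ℝ)| ≤ maxAbs k := by
  rw [← Int.cast_abs, ← Nat.cast_natAbs]
  exact_mod_cast natAbs_le_maxAbs k i

lemma maxAbs_le_znorm (k : Fin d → ℤ) : (maxAbs k : ℝ) ≤ znorm k := by
  refine (Nat.cast_le.mpr (Finset.sup_le fun i _ => Nat.le_floor ?_)).trans
    (Nat.floor_le (znorm_nonneg k))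
  rw [Nat.cast_natAbs, Int.cast_abs]
  exact abs_le_znorm k i

lemma one_add_sq_maxAbs_le_lam (k : Fin d → ℤ) : 1 + (maxAbs k : ℝ) ^ 2 ≤ lam k := by
  rw [lam_eq_one_add_sq_znorm]
  gcongr
  exact maxAbs_le_znorm k

lemma znorm_le_sqrt_mul_maxAbs (k : Fin d → ℤ) : znorm k ≤ √d * maxAbs k := by
  rw [← sqrt_sq (Nat.cast_nonneg (maxAbs k)), ← sqrt_mul (Nat.cast_nonneg d), znorm]
  refine sqrt_le_sqrt (le_of_le_of_eq (b := ∑ _i : Fin d, (maxAbs k : ℝ) ^ 2)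
    (sum_le_sum fun i _ => sq_le_sq.mpr ?_) (by simp))
  simpa using abs_le_maxAbs k i

noncomputable def cubeFace (i : Fin d) (n : ℕ) : Finset (Fin d → ℤ) :=
  Fintype.piFinset fun j => if j = i then {-(n : ℤ), (n : ℤ)} else Icc (-(n : ℤ)) n

lemma card_cubeFace_le (i : Fin d) (n : ℕ) : #(cubeFace i n) ≤ 2 * (2 * n + 1) ^ (d - 1) := by
  rw [cubeFace, Fintype.card_piFinset, ← mul_prod_erase univ _ (mem_univ i), if_pos rfl,
    prod_congr rfl fun j hj => by rw [if_neg (ne_of_mem_erase hj)], prod_const, Int.card_Icc,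
    card_erase_of_mem (mem_univ i), card_univ, Fintype.card_fin]
  gcongr
  · exact card_le_two
  · omega

lemma maxAbs_preimage_subset (hd : 1 ≤ d) (n : ℕ) :
    maxAbs ⁻¹' {n} ⊆ ((univ.biUnion (cubeFace · n) : Finset (Fin d → ℤ)) : Set (Fin d → ℤ)) := by
  intro k (hk : maxAbs k = n)
  have : (univ : Finset (Fin d)).Nonempty := univ_nonempty_iff.mpr ⟨⟨0, hd⟩⟩
  obtain ⟨i, -, hi⟩ := exists_mem_eq_sup univ this fun i => (k i).natAbs
  simp only [coe_biUnion, coe_univ, Set.mem_univ, Set.iUnion_true, Set.mem_iUnion, mem_coe]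
  refine ⟨i, Fintype.mem_piFinset.mpr fun j => ?_⟩
  have hj := hk ▸ natAbs_le_maxAbs k j
  split_ifs with hji
  · subst hji
    have : (k j).natAbs = n := hk ▸ hi.symm
    simp only [mem_insert, mem_singleton]
    omega
  · rw [mem_Icc]
    omega

lemma encard_maxAbs_preimage_le (hd : 1 ≤ d) (n : ℕ) :
    (maxAbs ⁻¹' {n} : Set (Fin d → ℤ)).encard ≤ (2 * d * (2 * n + 1) ^ (d - 1) : ℕ) := by
  refine (Set.encard_le_encard (maxAbs_preimage_subset hd n)).trans ?_
  rw [Set.encard_coe_eq_coe_finsetCard, Nat.cast_le]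
  calc #(univ.biUnion (cubeFace · n)) ≤ ∑ i : Fin d, #(cubeFace i n) := card_biUnion_le
    _ ≤ ∑ _i : Fin d, 2 * (2 * n + 1) ^ (d - 1) := sum_le_sum fun i _ => card_cubeFace_le i n
    _ = 2 * d * (2 * n + 1) ^ (d - 1) := by simp; ring

lemma tsum_comp_maxAbs_le (hd : 1 ≤ d) (g : ℕ → ℝ≥0∞) :
    ∑' k : Fin d → ℤ, g (maxAbs k) ≤ ∑' n, ((2 * d * (2 * n + 1) ^ (d - 1) : ℕ) : ℝ≥0∞) * g n := by
  rw [← ENNReal.tsum_fiberwise _ maxAbs]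
  refine ENNReal.tsum_le_tsum fun n => ?_
  let shell : Set (Fin d → ℤ) := maxAbs ⁻¹' {n}
  calc ∑' k : shell, g (maxAbs (k : Fin d → ℤ)) = ∑' _k : shell, g n :=
        tsum_congr fun k => congrArg g k.2
    _ = shell.encard * g n := ENNReal.tsum_set_const _ _
    _ ≤ _ := by gcongr; exact_mod_cast encard_maxAbs_preimage_le hd n

lemma tsum_rpow_neg_tail_le {p : ℝ} (hp : 1 < p) (N : ℕ) :
    ∑' n : ℕ, (if N ≤ n then ENNReal.ofReal (((n : ℝ) + 1) ^ (-p)) else 0)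
      ≤ ENNReal.ofReal (p / (p - 1) * ((N : ℝ) + 1) ^ (1 - p)) := by
  have hN : (0 : ℝ) < N + 1 := by positivity
  set f : ℕ → ℝ := fun m => ((m + N + 1 : ℕ) : ℝ) ^ (-p)
  have hsum : Summable f :=
    (summable_nat_add_iff (N + 1)).mpr (Real.summable_nat_rpow.mpr (by linarith))
  have hint : ∑' m, f (m + 1) ≤ ((N : ℝ) + 1) ^ (1 - p) / (p - 1) := by
    have h := AntitoneOn.tsum_comp_add_le_integral (N + 1) (f := fun x : ℝ => x ^ (-p))
      (fun x hx y _ hxy =>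
        rpow_le_rpow_of_nonpos (hN.trans_le (by simpa using hx)) hxy (by linarith))
      (integrableOn_Ioi_rpow_of_lt (by linarith) (by exact_mod_cast hN))
      (fun x hx => rpow_nonneg (hN.trans (by simpa using hx)).le _)
    rw [integral_Ioi_rpow_of_lt (by linarith) (by exact_mod_cast hN)] at h
    convert h using 1
    · exact tsum_congr fun m => by simp only [f]; push_cast; ring_nf
    · push_cast; rw [← neg_div_neg_eq]; ring_nf
  have hhead : f 0 ≤ ((N : ℝ) + 1) ^ (1 - p) := by
    simpa [f] using rpow_le_rpow_of_exponent_le (by linarith) (by linarith : -p ≤ 1 - p)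
  calc ∑' n : ℕ, (if N ≤ n then ENNReal.ofReal (((n : ℝ) + 1) ^ (-p)) else 0)
      = ∑' m, ENNReal.ofReal (f m) := by
        rw [← ENNReal.summable.sum_add_tsum_nat_add' (k := N),
          sum_eq_zero fun n hn => if_neg (by simpa using hn), zero_add]
        exact tsum_congr fun m => by simp [f]
    _ = ENNReal.ofReal (f 0 + ∑' m, f (m + 1)) := by
        rw [← hsum.tsum_eq_zero_add, ENNReal.ofReal_tsum_of_nonneg (fun _ => by positivity) hsum]
    _ ≤ ENNReal.ofReal (p / (p - 1) * ((N : ℝ) + 1) ^ (1 - p)) := by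
        refine ENNReal.ofReal_le_ofReal ((add_le_add hhead hint).trans_eq ?_)
        field_simp [(sub_pos.mpr hp).ne']
        ring

lemma one_div_lam_rpow_le (hα : 0 ≤ α) (k : Fin d → ℤ) :
    1 / lam k ^ α ≤ (1 + (maxAbs k : ℝ) ^ 2) ^ (-α) := by
  rw [rpow_neg (by positivity), one_div]
  exact inv_anti₀ (by positivity) (rpow_le_rpow (by positivity) (one_add_sq_maxAbs_le_lam k) hα)

lemma exists_shell_weight_le (hd : 1 ≤ d) (hα : 0 ≤ α) : ∃ C : ℝ, 0 ≤ C ∧ ∀ n : ℕ,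
    ((2 * d * (2 * n + 1) ^ (d - 1) : ℕ) : ℝ) * (1 + (n : ℝ) ^ 2) ^ (-α)
      ≤ C * ((n : ℝ) + 1) ^ (-(2 * α + 1 - d)) := by
  refine ⟨2 * d * 2 ^ (d - 1) * 2 ^ α, by positivity, fun n => ?_⟩
  have hn : (0 : ℝ) < n + 1 := by positivity
  have hcount : ((2 * n + 1 : ℕ) : ℝ) ^ (d - 1) ≤ 2 ^ (d - 1) * ((n : ℝ) + 1) ^ ((d : ℝ) - 1) := by
    rw [← Nat.cast_pred hd, rpow_natCast, ← mul_pow]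
    gcongr
    push_cast
    linarith
  have hweight : (1 + (n : ℝ) ^ 2) ^ (-α) ≤ 2 ^ α * ((n : ℝ) + 1) ^ (-(2 * α)) := by
    have h : ((n : ℝ) + 1) ^ 2 / 2 ≤ 1 + (n : ℝ) ^ 2 := by nlinarith [sq_nonneg ((n : ℝ) - 1)]
    calc (1 + (n : ℝ) ^ 2) ^ (-α) ≤ (((n : ℝ) + 1) ^ 2 / 2) ^ (-α) :=
          rpow_le_rpow_of_nonpos (by positivity) h (by linarith)
      _ = 2 ^ α * ((n : ℝ) + 1) ^ (-(2 * α)) := by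
          rw [div_rpow (by positivity) (by norm_num), ← rpow_natCast, ← rpow_mul hn.le,
            rpow_neg zero_le_two, div_inv_eq_mul, mul_comm]
          norm_num
  calc ((2 * d * (2 * n + 1) ^ (d - 1) : ℕ) : ℝ) * (1 + (n : ℝ) ^ 2) ^ (-α)
      ≤ (2 * d * (2 ^ (d - 1) * ((n : ℝ) + 1) ^ ((d : ℝ) - 1)))
          * (2 ^ α * ((n : ℝ) + 1) ^ (-(2 * α))) := by
        push_cast at hcount ⊢
        gcongr
    _ = 2 * d * 2 ^ (d - 1) * 2 ^ α * ((n : ℝ) + 1) ^ (-(2 * α + 1 - d)) := by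
        rw [show -(2 * α + 1 - d) = ((d : ℝ) - 1) + -(2 * α) by ring, rpow_add hn]
        ring

lemma exists_maxAbs_tail_le (hd : 1 ≤ d) (hα : (d : ℝ) / 2 < α) : ∃ C : ℝ, 0 ≤ C ∧ ∀ N : ℕ,
    ∑' k : Fin d → ℤ, (if N ≤ maxAbs k then ENNReal.ofReal (1 / lam k ^ α) else 0)
      ≤ ENNReal.ofReal (C * ((N : ℝ) + 1) ^ ((d : ℝ) - 2 * α)) := by
  have hα₀ : 0 ≤ α := by linarith [(Nat.cast_nonneg d : (0 : ℝ) ≤ d)]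
  set p := 2 * α + 1 - d
  have hp : 1 < p := by linarith
  obtain ⟨C, hC₀, hC⟩ := exists_shell_weight_le hd hα₀
  refine ⟨C * (p / (p - 1)), mul_nonneg hC₀ (div_nonneg (by linarith) (by linarith)), fun N => ?_⟩
  let g : ℕ → ℝ≥0∞ := fun n => if N ≤ n then ENNReal.ofReal ((1 + (n : ℝ) ^ 2) ^ (-α)) else 0
  calc ∑' k : Fin d → ℤ, (if N ≤ maxAbs k then ENNReal.ofReal (1 / lam k ^ α) else 0)
      ≤ ∑' k : Fin d → ℤ, g (maxAbs k) := by
        refine ENNReal.tsum_le_tsum fun k => ?_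
        simp only [g]
        split_ifs
        · exact ENNReal.ofReal_le_ofReal (one_div_lam_rpow_le hα₀ k)
        · exact le_rfl
    _ ≤ ∑' n, ((2 * d * (2 * n + 1) ^ (d - 1) : ℕ) : ℝ≥0∞) * g n := tsum_comp_maxAbs_le hd g
    _ ≤ ∑' n : ℕ,
          ENNReal.ofReal C * (if N ≤ n then ENNReal.ofReal (((n : ℝ) + 1) ^ (-p)) else 0) := by
        refine ENNReal.tsum_le_tsum fun n => ?_
        simp only [g]
        split_ifs
        · rw [← ENNReal.ofReal_natCast, ← ENNReal.ofReal_mul (Nat.cast_nonneg _),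
            ← ENNReal.ofReal_mul' (by positivity)]
          exact ENNReal.ofReal_le_ofReal (hC n)
        · simp
    _ = ENNReal.ofReal C * ∑' n : ℕ, (if N ≤ n then ENNReal.ofReal (((n : ℝ) + 1) ^ (-p)) else 0) :=
        ENNReal.tsum_mul_left
    _ ≤ ENNReal.ofReal C * ENNReal.ofReal (p / (p - 1) * ((N : ℝ) + 1) ^ (1 - p)) :=
        mul_le_mul_right (tsum_rpow_neg_tail_le hp N) _
    _ = ENNReal.ofReal (C * (p / (p - 1)) * ((N : ℝ) + 1) ^ ((d : ℝ) - 2 * α)) := by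
        rw [← ENNReal.ofReal_mul' (by positivity), show 1 - p = (d : ℝ) - 2 * α by ring, mul_assoc]

lemma exists_latticeTail_le (hd : 1 ≤ d) (hα : (d : ℝ) / 2 < α) : ∃ C : ℝ, 0 ≤ C ∧ ∀ r : ℝ, 0 ≤ r →
    latticeTail d α r ≤ ENNReal.ofReal (C * (1 + r) ^ ((d : ℝ) - 2 * α)) := by
  obtain ⟨C, hC₀, hC⟩ := exists_maxAbs_tail_le hd hα
  have he : (d : ℝ) - 2 * α ≤ 0 := by linarith
  have hsd : 0 < √(d : ℝ) := sqrt_pos.mpr (by exact_mod_cast hd)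
  refine ⟨C * √(d : ℝ) ^ (-((d : ℝ) - 2 * α)), by positivity, fun r hr => ?_⟩
  set N := ⌈r / √(d : ℝ)⌉₊
  have hN : 1 + r ≤ √(d : ℝ) * (N + 1) := by
    have h1 : 1 ≤ √(d : ℝ) := one_le_sqrt.mpr (by exact_mod_cast hd)
    have h2 : r ≤ √(d : ℝ) * N := by
      rw [← div_le_iff₀' hsd]; exact Nat.le_ceil _
    nlinarith
  calc latticeTail d α r
      ≤ ∑' k : Fin d → ℤ, (if N ≤ maxAbs k then ENNReal.ofReal (1 / lam k ^ α) else 0) := by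
        refine ENNReal.tsum_le_tsum fun k => ?_
        by_cases hk : r < znorm k
        · rw [if_pos hk, if_pos (Nat.ceil_le.mpr ((div_le_iff₀' hsd).mpr
            (hk.le.trans (znorm_le_sqrt_mul_maxAbs k))))]
        · rw [if_neg hk]; exact zero_le
    _ ≤ ENNReal.ofReal (C * ((N : ℝ) + 1) ^ ((d : ℝ) - 2 * α)) := hC N
    _ ≤ ENNReal.ofReal (C * √(d : ℝ) ^ (-((d : ℝ) - 2 * α)) * (1 + r) ^ ((d : ℝ) - 2 * α)) := by
        refine ENNReal.ofReal_le_ofReal ?_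
        rw [mul_assoc]
        refine mul_le_mul_of_nonneg_left ?_ hC₀
        rw [rpow_neg hsd.le, inv_mul_eq_div, le_div_iff₀' (by positivity),
          ← mul_rpow hsd.le (by positivity)]
        exact rpow_le_rpow_of_nonpos (by positivity) hN he

noncomputable def latticeCube (d M : ℕ) : Finset (Fin d → ℤ) :=
  Fintype.piFinset fun _ => Ico (M : ℤ) (2 * M)

lemma card_latticeCube (M : ℕ) : #(latticeCube d M) = M ^ d := by
  simp only [latticeCube, Fintype.card_piFinset, Int.card_Ico, prod_const, card_univ,
    Fintype.card_fin]
  congr 1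
  omega

lemma bounds_of_mem_latticeCube {M : ℕ} {k : Fin d → ℤ} (hk : k ∈ latticeCube d M) (i : Fin d) :
    (M : ℝ) ≤ k i ∧ (k i : ℝ) ≤ 2 * M := by
  have := mem_Ico.mp (Fintype.mem_piFinset.mp hk i)
  constructor <;> [exact_mod_cast this.1; exact_mod_cast this.2.le]

lemma le_znorm_of_mem_latticeCube (hd : 1 ≤ d) {M : ℕ} {k : Fin d → ℤ}
    (hk : k ∈ latticeCube d M) : (M : ℝ) ≤ znorm k :=
  (bounds_of_mem_latticeCube hk ⟨0, hd⟩).1.trans ((le_abs_self _).trans (abs_le_znorm k _))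

lemma lam_le_of_mem_latticeCube (hd : 1 ≤ d) {M : ℕ} (hM : 1 ≤ M) {k : Fin d → ℤ}
    (hk : k ∈ latticeCube d M) : lam k ≤ 5 * d * (M : ℝ) ^ 2 := by
  have hsum : ∑ i, (k i : ℝ) ^ 2 ≤ d * (2 * M) ^ 2 := by
    refine (sum_le_sum fun i _ => pow_le_pow_left₀ ?_ (bounds_of_mem_latticeCube hk i).2 2).trans_eq
      (by simp)
    linarith [(bounds_of_mem_latticeCube hk i).1, (Nat.cast_nonneg M : (0 : ℝ) ≤ M)]
  have : (1 : ℝ) ≤ d * M ^ 2 :=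
    one_le_mul_of_one_le_of_one_le (by exact_mod_cast hd) (one_le_pow₀ (by exact_mod_cast hM))
  rw [lam]
  nlinarith

lemma exists_le_latticeTail (hd : 1 ≤ d) (hα : (d : ℝ) / 2 ≤ α) : ∃ C : ℝ, 0 < C ∧ ∀ r : ℝ, 0 ≤ r →
    ENNReal.ofReal (C * (1 + r) ^ ((d : ℝ) - 2 * α)) ≤ latticeTail d α r := by
  have hd₀ : (0 : ℝ) < d := by exact_mod_cast hd
  refine ⟨(5 * d) ^ (-α), by positivity, fun r hr => ?_⟩
  set M := ⌊r⌋₊ + 1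
  have hrM : r < M := by simpa [M] using Nat.lt_floor_add_one r
  have hMr : (M : ℝ) ≤ 1 + r := by simpa [M, add_comm] using Nat.floor_le hr
  have hM₀ : (0 : ℝ) < M := by positivity
  have hα₀ : 0 ≤ α := le_trans (by positivity) hα
  have hweight : (M : ℝ) ^ d * (5 * d * (M : ℝ) ^ 2) ^ (-α)
      = (5 * d) ^ (-α) * (M : ℝ) ^ ((d : ℝ) - 2 * α) := by
    rw [mul_rpow (by positivity) (by positivity), ← rpow_natCast (M : ℝ) 2, ← rpow_mul hM₀.le,
      ← rpow_natCast (M : ℝ) d, mul_left_comm, sub_eq_add_neg, rpow_add hM₀]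
    ring_nf
  calc ENNReal.ofReal ((5 * d) ^ (-α) * (1 + r) ^ ((d : ℝ) - 2 * α))
      ≤ ENNReal.ofReal ((5 * d) ^ (-α) * (M : ℝ) ^ ((d : ℝ) - 2 * α)) := by
        refine ENNReal.ofReal_le_ofReal (mul_le_mul_of_nonneg_left ?_ (by positivity))
        exact rpow_le_rpow_of_nonpos hM₀ hMr (by linarith)
    _ = ∑ _k ∈ latticeCube d M, ENNReal.ofReal ((5 * d * (M : ℝ) ^ 2) ^ (-α)) := by
        rw [sum_const, nsmul_eq_mul, card_latticeCube, ← hweight,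
          ENNReal.ofReal_mul (by positivity)]
        norm_cast
    _ ≤ ∑ k ∈ latticeCube d M, (if r < znorm k then ENNReal.ofReal (1 / lam k ^ α) else 0) := by
        refine sum_le_sum fun k hk => ?_
        rw [if_pos (hrM.trans_le (le_znorm_of_mem_latticeCube hd hk)), rpow_neg (by positivity),
          ← one_div]
        exact ENNReal.ofReal_le_ofReal (one_div_le_one_div_of_le (rpow_pos_of_pos (lam_pos k) α)
          (rpow_le_rpow (lam_pos k).le (lam_le_of_mem_latticeCube hd (by simp [M]) hk) hα₀))
    _ ≤ latticeTail d α r := ENNReal.sum_le_tsum _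

lemma min_one_mul_sqrt_lam_le (hc : 0 ≤ c) (v : Fin d → ℤ) :
    min 1 c * √(lam v) ≤ 1 + c * znorm v :=
  calc min 1 c * √(lam v) ≤ min 1 c * (1 + znorm v) := by
        gcongr
        exact sqrt_lam_le_one_add_znorm v
    _ ≤ 1 + c * znorm v := by
        rw [mul_one_add]
        gcongr
        exacts [min_le_left _ _, znorm_nonneg v, min_le_right _ _]

lemma one_add_mul_znorm_le (hc : 0 ≤ c) (v : Fin d → ℤ) :
    1 + c * znorm v ≤ (1 + c) * √(lam v) := by
  rw [add_mul, one_mul]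
  gcongr
  exacts [one_le_sqrt_lam v, znorm_le_sqrt_lam v]

lemma mul_sqrt_rpow {a x : ℝ} (ha : 0 ≤ a) (hx : 0 ≤ x) (e : ℝ) :
    (a * √x) ^ e = a ^ e * x ^ (e / 2) := by
  rw [mul_rpow ha (sqrt_nonneg x), sqrt_eq_rpow, ← rpow_mul hx, one_div_mul_eq_div]

lemma exists_lt_lam_rpow (hd : 1 ≤ d) {γ : ℝ} (hγ : 0 < γ) (B : ℝ) :
    ∃ v : Fin d → ℤ, B < lam v ^ γ := by
  have h : Tendsto (fun n : ℕ => lam fun _ : Fin d => (n : ℤ)) atTop atTop := by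
    refine tendsto_atTop_mono (fun n => ?_) tendsto_natCast_atTop_atTop
    have : (1 : ℝ) ≤ d := by exact_mod_cast hd
    simp only [lam, Int.cast_natCast, sum_const, card_univ, Fintype.card_fin, nsmul_eq_mul]
    nlinarith [sq_nonneg ((n : ℝ) - 1)]
  obtain ⟨n, hn⟩ := (((tendsto_rpow_atTop hγ).comp h).eventually_gt_atTop B).exists
  exact ⟨_, hn⟩

lemma exists_lam_rpow_mul_latticeTail_le (hd : 1 ≤ d) (hα : (d : ℝ) / 2 < α) (β : ℝ) (hc : 0 < c) :
    ∃ C : ℝ, 0 ≤ C ∧ ∀ v : Fin d → ℤ, ENNReal.ofReal (lam v ^ β) * latticeTail d α (c * znorm v)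
      ≤ ENNReal.ofReal (C * lam v ^ (β + ((d : ℝ) - 2 * α) / 2)) := by
  obtain ⟨C, hC₀, hC⟩ := exists_latticeTail_le hd hα
  set e := (d : ℝ) - 2 * α
  refine ⟨C * min 1 c ^ e, by positivity, fun v => ?_⟩
  have hr : 0 ≤ c * znorm v := mul_nonneg hc.le (znorm_nonneg v)
  have hlam : 0 ≤ lam v ^ β := (rpow_pos_of_pos (lam_pos v) β).le
  have hbound : (1 + c * znorm v) ^ e ≤ min 1 c ^ e * lam v ^ (e / 2) := by
    rw [← mul_sqrt_rpow (le_min zero_le_one hc.le) (lam_pos v).le]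
    exact rpow_le_rpow_of_nonpos (mul_pos (lt_min one_pos hc) (sqrt_pos.mpr (lam_pos v)))
      (min_one_mul_sqrt_lam_le hc.le v) (by linarith)
  calc ENNReal.ofReal (lam v ^ β) * latticeTail d α (c * znorm v)
      ≤ ENNReal.ofReal (lam v ^ β) * ENNReal.ofReal (C * (1 + c * znorm v) ^ e) := by
        gcongr; exact hC _ hr
    _ = ENNReal.ofReal (lam v ^ β * (C * (1 + c * znorm v) ^ e)) :=
        (ENNReal.ofReal_mul hlam).symm
    _ ≤ ENNReal.ofReal (C * min 1 c ^ e * lam v ^ (β + e / 2)) := by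
        refine ENNReal.ofReal_le_ofReal ?_
        rw [rpow_add (lam_pos v)]
        calc lam v ^ β * (C * (1 + c * znorm v) ^ e)
            ≤ lam v ^ β * (C * (min 1 c ^ e * lam v ^ (e / 2))) := by gcongr
          _ = C * min 1 c ^ e * (lam v ^ β * lam v ^ (e / 2)) := by ring

lemma exists_le_lam_rpow_mul_latticeTail (hd : 1 ≤ d) (hα : (d : ℝ) / 2 ≤ α) (β : ℝ) (hc : 0 ≤ c) :
    ∃ C : ℝ, 0 < C ∧ ∀ v : Fin d → ℤ, ENNReal.ofReal (C * lam v ^ (β + ((d : ℝ) - 2 * α) / 2))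
      ≤ ENNReal.ofReal (lam v ^ β) * latticeTail d α (c * znorm v) := by
  obtain ⟨C, hC₀, hC⟩ := exists_le_latticeTail hd hα
  set e := (d : ℝ) - 2 * α
  refine ⟨C * (1 + c) ^ e, mul_pos hC₀ (rpow_pos_of_pos (by linarith) _), fun v => ?_⟩
  have hr : 0 ≤ c * znorm v := mul_nonneg hc (znorm_nonneg v)
  have hlam : 0 ≤ lam v ^ β := (rpow_pos_of_pos (lam_pos v) β).le
  have hbound : (1 + c) ^ e * lam v ^ (e / 2) ≤ (1 + c * znorm v) ^ e := by
    rw [← mul_sqrt_rpow (by linarith) (lam_pos v).le]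
    exact rpow_le_rpow_of_nonpos (by linarith) (one_add_mul_znorm_le hc v) (by linarith)
  calc ENNReal.ofReal (C * (1 + c) ^ e * lam v ^ (β + e / 2))
      ≤ ENNReal.ofReal (lam v ^ β * (C * (1 + c * znorm v) ^ e)) := by
        refine ENNReal.ofReal_le_ofReal ?_
        rw [rpow_add (lam_pos v)]
        calc C * (1 + c) ^ e * (lam v ^ β * lam v ^ (e / 2))
            = lam v ^ β * (C * ((1 + c) ^ e * lam v ^ (e / 2))) := by ring
          _ ≤ lam v ^ β * (C * (1 + c * znorm v) ^ e) := by gcongr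
    _ = ENNReal.ofReal (lam v ^ β) * ENNReal.ofReal (C * (1 + c * znorm v) ^ e) :=
        ENNReal.ofReal_mul hlam
    _ ≤ ENNReal.ofReal (lam v ^ β) * latticeTail d α (c * znorm v) := by
        gcongr; exact hC _ hr

end GrowthRate

/-- Growth rate of infinite sums:
`sup_{v ∈ ℤ^d} [ (λ_v)^β · Σ_{k ∈ ℤ^d, ‖k‖ > c‖v‖} 1/(λ_k)^α ] < ∞` iff `β ≤ α − d/2`,
for `α ∈ (d/2, ∞)`, `β ∈ ℝ`, `c ∈ (0,∞)`. -/
theorem growth_rate_infinite_sums (d : ℕ) (hd : 1 ≤ d) (α : ℝ)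
    (hα : (d : ℝ) / 2 < α) (β : ℝ) (c : ℝ) (hc : 0 < c) :
    (⨆ v : Fin d → ℤ, ENNReal.ofReal ((lam v) ^ β) *
        ∑' k : Fin d → ℤ,
          (if c * znorm v < znorm k then ENNReal.ofReal (1 / (lam k) ^ α) else 0)) < ⊤
      ↔ β ≤ α - (d : ℝ) / 2 := by
  change (⨆ v : Fin d → ℤ, ENNReal.ofReal (lam v ^ β) * latticeTail d α (c * znorm v)) < ⊤ ↔ _
  constructor
  · intro hfin
    by_contra! hβ
    obtain ⟨C, hC₀, hC⟩ := exists_le_lam_rpow_mul_latticeTail hd hα.le β hc.le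
    set S := ⨆ v : Fin d → ℤ, ENNReal.ofReal (lam v ^ β) * latticeTail d α (c * znorm v)
    obtain ⟨v, hv⟩ := exists_lt_lam_rpow hd (γ := β + ((d : ℝ) - 2 * α) / 2) (by linarith)
      (S.toReal / C)
    have hle : C * lam v ^ (β + ((d : ℝ) - 2 * α) / 2) ≤ S.toReal :=
      (ENNReal.ofReal_le_iff_le_toReal hfin.ne).mp ((hC v).trans (le_iSup_of_le v le_rfl))
    rw [div_lt_iff₀' hC₀] at hv
    linarith
  · intro hβ
    obtain ⟨C, hC₀, hC⟩ := exists_lam_rpow_mul_latticeTail_le hd hα β hc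
    refine (iSup_le fun v => (hC v).trans (ENNReal.ofReal_le_ofReal (q := C) ?_)).trans_lt
      ENNReal.ofReal_lt_top
    exact mul_le_of_le_one_right hC₀ (rpow_le_one_of_one_le_of_nonpos (one_le_lam v) (by linarith))
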